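/- Let (κ_t) be a continuous one-parameter group of bounded operators on a complex Banach space V, and let a ∈ V be nonzero. Suppose there is a finite-dimensional subspace L ⊆ V and δ > 0 such that κ_t(a) ∈ L for all |t| < δ. Then the linear span of {κ_t(a) : t ∈ ℝ} is finite-dimensional and is invariant under every κ_t. -/
import Mathlib


/-- If a continuous one-parameter group of operators on a complex Banach space
moves a nonzero vector `a` inside a fixed finite-dimensional subspace `L` for all
small times, then the span of the whole orbit `{κ t a : t ∈ ℝ}` is
finite-dimensional and invariant under every `κ t`. -/
theorem stmt2 {V : Type*} [NormedAddCommGroup V] [NormedSpace ℂ V]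
    [CompleteSpace V]
    (κ : ℝ → (V →L[ℂ] V))
    (hunit : ∀ t : ℝ, ∃ σ : V →L[ℂ] V, (κ t).comp σ = 1 ∧ σ.comp (κ t) = 1)
    (h0 : κ 0 = 1)
    (hadd : ∀ s t : ℝ, κ (s + t) = (κ s).comp (κ t))
    (hcont : ∀ v : V, Continuous fun t : ℝ => κ t v)
    (a : V) (ha : a ≠ 0)
    (L : Submodule ℂ V) (hL : FiniteDimensional ℂ L)
    (δ : ℝ) (hδ : 0 < δ)
    (horb : ∀ t : ℝ, |t| < δ → κ t a ∈ L) :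
    FiniteDimensional ℂ (Submodule.span ℂ {x : V | ∃ t : ℝ, x = κ t a}) ∧
      ∀ (t : ℝ) (x : V), x ∈ Submodule.span ℂ {x : V | ∃ t : ℝ, x = κ t a} →
        κ t x ∈ Submodule.span ℂ {x : V | ∃ t : ℝ, x = κ t a} := by
  classical
  set S₀ : Set V := {x : V | ∃ t : ℝ, |t| < δ ∧ x = κ t a} with hS₀
  set M : Submodule ℂ V := Submodule.span ℂ S₀ with hM
  have hML : M ≤ L := Submodule.span_le.2 (by rintro x ⟨t, ht, rfl⟩; exact horb t ht)
  have hMfin : FiniteDimensional ℂ M := Submodule.finiteDimensional_of_le hML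
  have haM : a ∈ M := by
    have h1 : κ 0 a ∈ S₀ := ⟨0, by simpa using hδ, rfl⟩
    have := Submodule.subset_span (R := ℂ) h1
    simpa [h0] using this
  -- extract a finite spanning subset of S₀
  have hFG : M.FG := (Submodule.fg_top M).mp (Module.finite_def.mp hMfin)
  obtain ⟨G, hG⟩ := hFG
  have hGmem : ∀ g ∈ G, ∃ T : Finset V, ↑T ⊆ S₀ ∧ g ∈ Submodule.span ℂ (T : Set V) := by
    intro g hg
    have : g ∈ M := hG ▸ Submodule.subset_span hg
    exact Submodule.mem_span_finite_of_mem_span this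
  choose! T hT1 hT2 using hGmem
  set U : Finset V := G.biUnion T with hUdef
  have hU1 : (U : Set V) ⊆ S₀ := by
    intro x hx
    simp only [hUdef, Finset.coe_biUnion, Set.mem_iUnion] at hx
    obtain ⟨g, hg, hx⟩ := hx
    exact hT1 g hg hx
  have hU2 : M = Submodule.span ℂ (U : Set V) := by
    apply le_antisymm
    · rw [← hG]
      apply Submodule.span_le.2
      intro g hg
      refine Submodule.span_mono ?_ (hT2 g hg)
      exact_mod_cast Finset.coe_subset.mpr (Finset.subset_biUnion_of_mem T hg)
    · exact Submodule.span_le.2 fun x hx => Submodule.subset_span (hU1 hx)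
  -- small times map the generators into M
  have key : ∀ᶠ e in nhds (0 : ℝ), ∀ v ∈ (U : Set V), κ e v ∈ M := by
    rw [Filter.eventually_all_finite U.finite_toSet]
    intro v hv
    obtain ⟨t, ht, rfl⟩ := hU1 hv
    have htend : Filter.Tendsto (fun e : ℝ => |e + t|) (nhds 0) (nhds |t|) := by
      have : Continuous fun e : ℝ => |e + t| :=
        continuous_abs.comp (continuous_id.add continuous_const)
      simpa using this.tendsto 0
    filter_upwards [htend.eventually_lt_const ht] with e he
    have : κ e (κ t a) = κ (e + t) a := by rw [hadd]; rfl
    rw [this]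
    exact Submodule.subset_span ⟨e + t, he, rfl⟩
  obtain ⟨ε, hε, hball⟩ := Metric.eventually_nhds_iff.mp key
  -- small times map M into M
  have hstep : ∀ e : ℝ, |e| < ε → ∀ x ∈ M, κ e x ∈ M := by
    intro e he x hx
    rw [hU2] at hx
    refine Submodule.span_induction (fun v hv => ?_) ?_ ?_ ?_ hx
    · exact hball (by simpa [Real.dist_eq] using he) v hv
    · simpa using M.zero_mem
    · intro x y _ _ hx hy; rw [map_add]; exact M.add_mem hx hy
    · intro c x _ hx; rw [map_smul]; exact M.smul_mem c hx
  -- the whole orbit lies in M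
  have horbM : ∀ s : ℝ, κ s a ∈ M := by
    intro s
    obtain ⟨n, hn⟩ := exists_nat_gt (|s| / ε)
    have hn0 : (0 : ℝ) < n := lt_of_le_of_lt (by positivity) hn
    have he : |s / (n : ℝ)| < ε := by
      rw [abs_div, abs_of_pos hn0, div_lt_iff₀ hn0]
      have h1 : |s| < (n : ℝ) * ε := (div_lt_iff₀ hε).mp hn
      linarith
    have key2 : ∀ m : ℕ, κ ((m : ℝ) * (s / n)) a ∈ M := by
      intro m
      induction m with
      | zero => simpa [h0] using haM
      | succ m ih =>
        have heq : ((m + 1 : ℕ) : ℝ) * (s / n) = s / n + (m : ℝ) * (s / n) := by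
          push_cast; ring
        rw [heq, hadd]
        exact hstep _ he _ ih
    have hns : (n : ℝ) * (s / n) = s := by field_simp
    have := key2 n
    rwa [hns] at this
  have hOM : Submodule.span ℂ {x : V | ∃ t : ℝ, x = κ t a} ≤ M :=
    Submodule.span_le.2 (by rintro x ⟨t, rfl⟩; exact horbM t)
  refine ⟨Submodule.finiteDimensional_of_le (hOM.trans hML), ?_⟩
  intro t x hx
  refine Submodule.span_induction (fun v hv => ?_) ?_ ?_ ?_ hx
  · obtain ⟨s, rfl⟩ := hv
    have : κ t (κ s a) = κ (t + s) a := by rw [hadd]; rfl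
    rw [this]
    exact Submodule.subset_span ⟨t + s, rfl⟩
  · simpa using Submodule.zero_mem _
  · intro x y _ _ hx hy; rw [map_add]; exact Submodule.add_mem _ hx hy
  · intro c x _ hx; rw [map_smul]; exact Submodule.smul_mem _ c hx
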